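/- For the cycle C_4, QEC(C_4) = 0. -/
import Mathlib


/-- Cyclic distance on the cycle C_m with vertices identified with Fin m. -/
def cycDist (m : ℕ) (i j : Fin m) : ℕ :=
  min ((i.val + m - j.val) % m) ((j.val + m - i.val) % m)

/-- QEC(C_4) = 0. -/
theorem qec_cycle_four :
    IsGreatest {x : ℝ | ∃ f : Fin 4 → ℝ,
      (∑ i, f i ^ 2) = 1 ∧ (∑ i, f i) = 0 ∧
      x = ∑ i, ∑ j, (cycDist 4 i j : ℝ) * f i * f j} 0 := by
  constructor
  · refine ⟨![1/2, -1/2, 1/2, -1/2], ?_, ?_, ?_⟩ <;>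
      simp [Fin.sum_univ_four, cycDist, show ((3:Fin 4)).val = 3 from rfl] <;> norm_num
  · rintro x ⟨f, h1, h2, rfl⟩
    simp only [Fin.sum_univ_four, cycDist, show ((3:Fin 4)).val = 3 from rfl] at h2 ⊢
    norm_num
    nlinarith [sq_nonneg (f 0 - f 2), sq_nonneg (f 1 - f 3), sq_nonneg (f 0 + f 2)]
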